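/- Let F : C ⥤ D be a functor between cocomplete categories, and let u, v : A ⥤ B be fully faithful functors such that F preserves left Kan extensions along the composite v ∘ u (assumed fully faithful as well, e.g. with v fully faithful). Then F preserves left Kan extensions along u; that is, the canonical comparison u_!(F X) → F(u_! X) is an isomorphism for all X : A ⥤ C. -/

import Mathlib

/-!
Along a fully faithful `w`, the unit of `w_! ⊣ w^*` is invertible, so the comparison map for `X`
is invertible iff `F(w_! X)` lies in the essential image of `w_!`. As `v` is fully faithful,
`(u ⋙ v)_! ≅ v_! ∘ u_!` and restricting along `v` undoes `v_!`; hence restricting an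
isomorphism `F((u ⋙ v)_! X) ≅ (u ⋙ v)_! Z` along `v` gives `F(u_! X) ≅ u_! Z`.
-/

open CategoryTheory CategoryTheory.Limits

universe u₁ v₃ u₃

variable {A : Type u₁} [SmallCategory A] {B : Type u₁} [SmallCategory B]
  {E : Type u₁} [SmallCategory E]
  {C : Type u₃} [Category.{v₃} C] {D : Type u₃} [Category.{v₃} D]

/-- The canonical comparison map `w_!(X ⋙ F) ⟶ (w_! X) ⋙ F`. -/
noncomputable def lanComparison {A' B' : Type u₁} [SmallCategory A'] [SmallCategory B']
    (w : A' ⥤ B')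
    (lanC : (A' ⥤ C) ⥤ (B' ⥤ C)) (adjC : lanC ⊣ (Functor.whiskeringLeft A' B' C).obj w)
    (lanD : (A' ⥤ D) ⥤ (B' ⥤ D)) (adjD : lanD ⊣ (Functor.whiskeringLeft A' B' D).obj w)
    (F : C ⥤ D) (X : A' ⥤ C) :
    lanD.obj (X ⋙ F) ⟶ lanC.obj X ⋙ F :=
  (adjD.homEquiv (X ⋙ F) (lanC.obj X ⋙ F)).symm
    (Functor.whiskerRight (adjC.unit.app X) F)

namespace CategoryTheory

section Adjunction

variable {C₁ C₂ C₃ : Type*} [Category C₁] [Category C₂] [Category C₃]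

/-- For Kan extensions: `(u ⋙ v)_!` followed by restriction along a fully faithful `v`
is `u_!`. -/
noncomputable def Adjunction.leftAdjointCompIsoOfIsIsoUnit {L₁ : C₁ ⥤ C₂} {R₁ : C₂ ⥤ C₁}
    {L₂ : C₂ ⥤ C₃} {R₂ : C₃ ⥤ C₂} {L : C₁ ⥤ C₃}
    (adj₁ : L₁ ⊣ R₁) (adj₂ : L₂ ⊣ R₂) [IsIso adj₂.unit] (adj : L ⊣ R₂ ⋙ R₁) :
    L ⋙ R₂ ≅ L₁ :=
  Functor.isoWhiskerRight (adj.leftAdjointUniq (adj₁.comp adj₂)) R₂ ≪≫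
    Functor.associator L₁ L₂ R₂ ≪≫ Functor.isoWhiskerLeft L₁ (asIso adj₂.unit).symm ≪≫
    Functor.rightUnitor L₁

lemma Functor.essImage.of_comp_iso {L : C₁ ⥤ C₂} {R : C₂ ⥤ C₃} {L' : C₁ ⥤ C₃}
    (e : L ⋙ R ≅ L') {T : C₂} (hT : L.essImage T) : L'.essImage (R.obj T) := by
  obtain ⟨Z, ⟨i⟩⟩ := hT
  exact ⟨Z, ⟨e.symm.app Z ≪≫ R.mapIso i⟩⟩

end Adjunction

lemma Functor.isIso_unit_of_adj_whiskeringLeft {A' B' H : Type*} [Category A'] [Category B']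
    [Category H] (w : A' ⥤ B') [w.Full] [w.Faithful]
    [∀ X : A' ⥤ H, w.HasPointwiseLeftKanExtension X]
    {lan : (A' ⥤ H) ⥤ (B' ⥤ H)} (adj : lan ⊣ (Functor.whiskeringLeft A' B' H).obj w) :
    IsIso adj.unit := by
  rw [← Adjunction.unit_leftAdjointUniq_hom (w.lanAdjunction H) adj]
  infer_instance

end CategoryTheory

lemma lanComparison_eq {A' B' : Type u₁} [SmallCategory A'] [SmallCategory B'] (w : A' ⥤ B')
    (lanC : (A' ⥤ C) ⥤ (B' ⥤ C)) (adjC : lanC ⊣ (Functor.whiskeringLeft A' B' C).obj w)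
    (lanD : (A' ⥤ D) ⥤ (B' ⥤ D)) (adjD : lanD ⊣ (Functor.whiskeringLeft A' B' D).obj w)
    (F : C ⥤ D) (X : A' ⥤ C) :
    lanComparison w lanC adjC lanD adjD F X =
      lanD.map (Functor.whiskerRight (adjC.unit.app X) F) ≫ adjD.counit.app (lanC.obj X ⋙ F) :=
  adjD.homEquiv_counit _ _ _

lemma isIso_lanComparison_iff {A' B' : Type u₁} [SmallCategory A'] [SmallCategory B']
    (w : A' ⥤ B')
    (lanC : (A' ⥤ C) ⥤ (B' ⥤ C)) (adjC : lanC ⊣ (Functor.whiskeringLeft A' B' C).obj w)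
    (lanD : (A' ⥤ D) ⥤ (B' ⥤ D)) (adjD : lanD ⊣ (Functor.whiskeringLeft A' B' D).obj w)
    [IsIso adjC.unit] [IsIso adjD.unit] (F : C ⥤ D) (X : A' ⥤ C) :
    IsIso (lanComparison w lanC adjC lanD adjD F X) ↔ lanD.essImage (lanC.obj X ⋙ F) := by
  have hD := adjD.fullyFaithfulLOfIsIsoUnit
  have := hD.full
  have := hD.faithful
  rw [lanComparison_eq, isIso_comp_left_iff, adjD.isIso_counit_app_iff_mem_essImage]

/-- Cancellation: if `u` and `v` are fully faithful and `F` preserves left Kan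
extensions along `u ⋙ v`, then `F` preserves left Kan extensions along `u`. -/
theorem preserves_lan_of_preserves_lan_comp
    [HasColimitsOfSize.{u₁, u₁} C] [HasColimitsOfSize.{u₁, u₁} D]
    (u : A ⥤ B) [u.Full] [u.Faithful] (v : B ⥤ E) [v.Full] [v.Faithful]
    (F : C ⥤ D)
    (lanUC : (A ⥤ C) ⥤ (B ⥤ C)) (adjUC : lanUC ⊣ (Functor.whiskeringLeft A B C).obj u)
    (lanUD : (A ⥤ D) ⥤ (B ⥤ D)) (adjUD : lanUD ⊣ (Functor.whiskeringLeft A B D).obj u)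
    (lanWC : (A ⥤ C) ⥤ (E ⥤ C))
    (adjWC : lanWC ⊣ (Functor.whiskeringLeft A E C).obj (u ⋙ v))
    (lanWD : (A ⥤ D) ⥤ (E ⥤ D))
    (adjWD : lanWD ⊣ (Functor.whiskeringLeft A E D).obj (u ⋙ v))
    (h : ∀ X : A ⥤ C, IsIso (lanComparison (u ⋙ v) lanWC adjWC lanWD adjWD F X)) :
    ∀ X : A ⥤ C, IsIso (lanComparison u lanUC adjUC lanUD adjUD F X) := by
  intro X
  have := u.isIso_unit_of_adj_whiskeringLeft adjUC
  have := u.isIso_unit_of_adj_whiskeringLeft adjUD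
  have := (u ⋙ v).isIso_unit_of_adj_whiskeringLeft adjWC
  have := (u ⋙ v).isIso_unit_of_adj_whiskeringLeft adjWD
  have hW := (isIso_lanComparison_iff (u ⋙ v) lanWC adjWC lanWD adjWD F X).1 (h X)
  have eC := adjUC.leftAdjointCompIsoOfIsIsoUnit (v.lanAdjunction C) adjWC
  have eD := adjUD.leftAdjointCompIsoOfIsIsoUnit (v.lanAdjunction D) adjWD
  rw [isIso_lanComparison_iff]
  exact (hW.of_comp_iso eD).ofIso (Functor.isoWhiskerRight (eC.app X) F)
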